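/- For the bandwidth-limited channel model with capacity C < N and failure rate ε ∈ [0,1), if c < v·(1−ε) and v·ε + c > 0, then the maximum of h(n) = n·(v·P(n) − c) over n ∈ {0,...,N} is attained at n = C, with value C·(v·(1−ε) − c). -/
import Mathlib


/-- Bandwidth-limited channel: if `c < v(1−ε)` and `v·ε + c > 0`, the optimum over
`{0,…,N}` is `n = C`, with value `C·(v(1−ε) − c)`. -/
theorem bw_full_capacity (N C : ℕ) (hC : 0 < C) (hCN : C < N)
    (v c ε : ℝ) (hv : 0 < v) (hc : 0 ≤ c) (hε0 : 0 ≤ ε) (hε1 : ε < 1)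
    (P : ℕ → ℝ) (hP : ∀ n, P n = if n ≤ C then 1 - ε else (C : ℝ) / n - ε)
    (h : ℕ → ℝ) (hh : ∀ n, h n = n * (v * P n - c))
    (hcv : c < v * (1 - ε)) (hpos : 0 < v * ε + c) :
    (∀ n ≤ N, h n ≤ h C) ∧ h C = C * (v * (1 - ε) - c) := by
  have hCval : h C = C * (v * (1 - ε) - c) := by
    rw [hh, hP]; simp
  refine ⟨fun n _ => ?_, hCval⟩
  rw [hCval, hh, hP]
  by_cases hn : n ≤ C
  · simp only [if_pos hn]
    have : (0:ℝ) ≤ v * (1 - ε) - c := by linarith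
    have hnc : (n:ℝ) ≤ C := by exact_mod_cast hn
    nlinarith
  · simp only [if_neg hn]
    push_neg at hn
    have hn0 : (0:ℝ) < n := by exact_mod_cast hC.trans hn
    have hnc : (C:ℝ) < n := by exact_mod_cast hn
    have : (n:ℝ) * (v * ((C:ℝ)/n - ε) - c) = v * C - n * (v * ε + c) := by
      field_simp; ring
    rw [this]
    nlinarith [mul_lt_mul_of_pos_right hnc hpos]
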